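/- The Kovalevskaya matrix of the undeformed DGR system at the point I₃ = (−2,0,4,0), namely the 4×4 matrix K(I₃) with rows (2,0,1,0), (0,2,0,−1/3), (12,0,3,0), (0,−6,0,3), has characteristic polynomial (X−1)(X−4)(X−6)(X+1); and at the point I₂ = (−18,−24,36,−144), the Kovalevskaya matrix K(I₂) with rows (2,0,1,0), (0,2,0,−1/3), (108,−72,3,0), (−72,18,0,3) has characteristic polynomial (X−6)(X−12)(X+1)(X+7). In particular the Kovalevskaya exponents at I₃ are {1,4,6,−1} and at I₂ are {6,12,−1,−7}. -/

import Mathlib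

/-!
In the coordinates `(q, Q | p, P)` a Kovalevskaya matrix of the DGR system has the block form
`[[2, B], [A, 3]]` with scalar diagonal blocks, so `det (x - K) = det ((x - 2)(x - 3) - B A)`:
the characteristic polynomial of `K` is that of the `2 × 2` matrix `B A` composed with
`(X - 2)(X - 3)`. At `I₃` the eigenvalues of `B A` are `2, 12`, at `I₂` they are `12, 90`, and
solving `(x - 2)(x - 3) = μ` for these `μ` gives the four exponents.
-/

open Polynomial

/-- The Kovalevskaya matrix of the undeformed DGR system at I₃ = (−2,0,4,0). -/
noncomputable def K₃ : Matrix (Fin 4) (Fin 4) ℂ :=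
  !![2, 0, 1, 0;
     0, 2, 0, -1/3;
     12, 0, 3, 0;
     0, -6, 0, 3]

/-- The Kovalevskaya matrix of the undeformed DGR system at I₂ = (−18,−24,36,−144). -/
noncomputable def K₂ : Matrix (Fin 4) (Fin 4) ℂ :=
  !![2, 0, 1, 0;
     0, 2, 0, -1/3;
     108, -72, 3, 0;
     -72, 18, 0, 3]

namespace Matrix

variable {n α : Type*} [Fintype n] [DecidableEq n] [CommRing α]

theorem det_fromBlocks_of_commute {A B C D : Matrix n n α} (hCD : Commute C D)
    (hD : IsRegular D.det) : (fromBlocks A B C D).det = (A * D - B * C).det := by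
  have hmul : fromBlocks A B C D * fromBlocks D 0 (-C) 1 = fromBlocks (A * D - B * C) B 0 D := by
    rw [fromBlocks_multiply, hCD.eq]
    simp [sub_eq_add_neg]
  apply hD.right
  simpa [det_mul, det_fromBlocks_zero₁₂, det_fromBlocks_zero₂₁] using congrArg det hmul

theorem charmatrix_scalar (a : α) : charmatrix (scalar n a) = scalar n (X - C a) :=
  charmatrix_diagonal _

theorem charpoly_comp (P : Matrix n n α) (p : α[X]) :
    P.charpoly.comp p = (scalar n p - P.map C).det := by
  have hmap : (charmatrix P).map (compRingHom p) = scalar n p - P.map C := by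
    ext i j : 1
    by_cases h : i = j
    · subst h; simp [compRingHom]
    · simp [compRingHom, h]
  rw [charpoly, ← coe_compRingHom_apply, RingHom.map_det, RingHom.mapMatrix_apply, hmap]

theorem charpoly_fromBlocks_scalar (a b : α) (M N : Matrix n n α) :
    (fromBlocks (scalar n a) M N (scalar n b)).charpoly =
      (M * N).charpoly.comp ((X - C a) * (X - C b)) := by
  have hcomm : Commute (-N.map C) (scalar n (X - C b)) :=
    (scalar_commute _ (fun _ => Commute.all _ _) _).symm
  have hreg : IsRegular (scalar n (X - C b)).det := by
    rw [scalar_apply, det_diagonal, Finset.prod_const]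
    exact ((monic_X_sub_C b).pow _).isRegular
  rw [charpoly, charmatrix_fromBlocks, charmatrix_scalar, charmatrix_scalar,
    det_fromBlocks_of_commute hcomm hreg, charpoly_comp, map_mul, Matrix.map_mul, neg_mul_neg]

end Matrix

open Matrix

/-- `K(m)` at `m = (q, Q, p, P)`, blocked as `(q, Q | p, P)`: the weights on the diagonal,
`∂(q̇, Q̇)/∂(p, P)` top right and `∂(ṗ, Ṗ)/∂(q, Q)` bottom left. It does not depend on `p, P`. -/
noncomputable def kovalevskayaMatrix (q Q : ℂ) : Matrix (Fin 4) (Fin 4) ℂ :=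
  reindex finSumFinEquiv finSumFinEquiv
    (fromBlocks (scalar (Fin 2) 2) !![1, 0; 0, -1/3] !![-6 * q, 3 * Q; 3 * Q, 3 * q - 3 * Q]
      (scalar (Fin 2) 3))

theorem charpoly_kovalevskayaMatrix (q Q : ℂ) :
    (kovalevskayaMatrix q Q).charpoly =
      (!![1, 0; 0, -1/3] * !![-6 * q, 3 * Q; 3 * Q, 3 * q - 3 * Q]).charpoly.comp
        ((X - C 2) * (X - C 3)) := by
  rw [kovalevskayaMatrix, charpoly_reindex, charpoly_fromBlocks_scalar]

theorem K₃_eq_kovalevskayaMatrix : K₃ = kovalevskayaMatrix (-2) 0 := by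
  norm_num only [K₃, kovalevskayaMatrix]
  ext i j
  fin_cases i <;> fin_cases j <;> rfl

theorem K₂_eq_kovalevskayaMatrix : K₂ = kovalevskayaMatrix (-18) (-24) := by
  norm_num only [K₂, kovalevskayaMatrix]
  ext i j
  fin_cases i <;> fin_cases j <;> rfl

theorem charpoly_K₃ : K₃.charpoly = (X - C 1) * (X - C 4) * (X - C 6) * (X + C 1) := by
  rw [K₃_eq_kovalevskayaMatrix, charpoly_kovalevskayaMatrix, charpoly_fin_two]
  norm_num [trace_fin_two, det_fin_two, ← C_mul, ← C_add, ← C_neg, C_ofNat]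
  ring

theorem charpoly_K₂ : K₂.charpoly = (X - C 6) * (X - C 12) * (X + C 1) * (X + C 7) := by
  rw [K₂_eq_kovalevskayaMatrix, charpoly_kovalevskayaMatrix, charpoly_fin_two]
  norm_num [trace_fin_two, det_fin_two, ← C_mul, ← C_add, ← C_neg, C_ofNat]
  ring

theorem roots_charpoly_K₃ : K₃.charpoly.roots = {1, 4, 6, -1} := by
  rw [charpoly_K₃, ← roots_multiset_prod_X_sub_C ({1, 4, 6, -1} : Multiset ℂ)]
  congr 1
  simp only [Multiset.insert_eq_cons, Multiset.map_cons, Multiset.map_singleton,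
    Multiset.prod_cons, Multiset.prod_singleton, map_neg, sub_neg_eq_add]
  ring

theorem roots_charpoly_K₂ : K₂.charpoly.roots = {6, 12, -1, -7} := by
  rw [charpoly_K₂, ← roots_multiset_prod_X_sub_C ({6, 12, -1, -7} : Multiset ℂ)]
  congr 1
  simp only [Multiset.insert_eq_cons, Multiset.map_cons, Multiset.map_singleton,
    Multiset.prod_cons, Multiset.prod_singleton, map_neg, sub_neg_eq_add]
  ring

/-- the characteristic polynomial of K(I₃) is (X−1)(X−4)(X−6)(X+1)
and that of K(I₂) is (X−6)(X−12)(X+1)(X+7); in particular the Kovalevskaya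
exponents at I₃ are {1,4,6,−1} and at I₂ are {6,12,−1,−7}. -/
theorem dgr_kovalevskaya_charpoly :
    (K₃.charpoly = (X - C 1) * (X - C 4) * (X - C 6) * (X + C 1) ∧
      K₂.charpoly = (X - C 6) * (X - C 12) * (X + C 1) * (X + C 7)) ∧
    K₃.charpoly.roots = {1, 4, 6, -1} ∧
    K₂.charpoly.roots = {6, 12, -1, -7} :=
  ⟨⟨charpoly_K₃, charpoly_K₂⟩, roots_charpoly_K₃, roots_charpoly_K₂⟩
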